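/- Let L be a principally generated C-lattice that is a lattice domain, and let a, x, y ∈ L be nonzero with x, y principal and x ≤ a, y ≤ a. Then (x : (x : a)) = (y : (y : a)). -/

import Mathlib

/-- A multiplicative lattice: a complete lattice (bottom `⊥` playing the role of `0`)
which is a commutative monoid whose identity `1` is the top element, and in which
multiplication distributes over arbitrary joins. -/
class MulLattice (L : Type*) extends CompleteLattice L, CommMonoid L where
  one_eq_top : (1 : L) = ⊤
  mul_sSup : ∀ (a : L) (S : Set L), a * sSup S = ⨆ b ∈ S, a * b

namespace MulLattice

variable {L : Type*} [MulLattice L]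

/-- The residual `(y : x) = ⋁ {a | a * x ≤ y}`. -/
def res (y x : L) : L := sSup {a : L | a * x ≤ y}

/-- `x` is meet-principal: `y ⊓ z * x = ((y : x) ⊓ z) * x` for all `y, z`. -/
def IsMeetPrincipal (x : L) : Prop := ∀ y z : L, y ⊓ z * x = (res y x ⊓ z) * x

/-- `x` is join-principal: `y ⊔ (z : x) = ((y * x ⊔ z) : x)` for all `y, z`. -/
def IsJoinPrincipal (x : L) : Prop := ∀ y z : L, y ⊔ res z x = res (y * x ⊔ z) x

/-- `x` is principal if it is both meet-principal and join-principal. -/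
def IsPrincipal (x : L) : Prop := IsMeetPrincipal x ∧ IsJoinPrincipal x

/-- A prime element: a proper element `p` with `x * y ≤ p → x ≤ p ∨ y ≤ p`. -/
def IsPrime (p : L) : Prop := p ≠ 1 ∧ ∀ x y : L, x * y ≤ p → x ≤ p ∨ y ≤ p

/-- A maximal element: an element maximal in `L - {1}`. -/
def IsMaximal (m : L) : Prop := m ≠ 1 ∧ ∀ b : L, m < b → b = 1

end MulLattice

/-- A principally generated C-lattice: a multiplicative lattice in which `1` is compact,
compact elements are closed under multiplication, every element is a join of compact
elements and every element is a join of principal elements. -/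
class PGCLattice (L : Type*) extends MulLattice L where
  top_isCompact : IsCompactElement (⊤ : L)
  compact_mul : ∀ a b : L, IsCompactElement a →
    IsCompactElement b → IsCompactElement (a * b)
  compactly_generated : ∀ a : L,
    a = sSup {c : L | IsCompactElement c ∧ c ≤ a}
  principally_generated : ∀ a : L,
    a = sSup {x : L | MulLattice.IsPrincipal x ∧ x ≤ a}

namespace MulLattice

variable {L : Type*}

/-- A lattice domain: `0 = ⊥` is a prime element. -/
def IsLatticeDomain (L : Type*) [MulLattice L] : Prop := IsPrime (⊥ : L)

variable [PGCLattice L]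

open Classical in
/-- The divisorial (`v`-)closure of `a`: equals `(x : (x : a))` for a nonzero principal
`x ≤ a` when such an `x` exists (in a lattice domain this is independent of the choice
of `x`), and `⊥` otherwise (in particular `vclos ⊥ = ⊥`). -/
noncomputable def vclos (a : L) : L :=
  if h : ∃ x : L, IsPrincipal x ∧ x ≠ ⊥ ∧ x ≤ a then
    res h.choose (res h.choose a)
  else ⊥

/-- `a` is divisorial if `a = a_v`. -/
def IsDivisorial (a : L) : Prop := vclos a = a

/-- `L` is h-local: every nonzero prime is below a unique maximal element and
every nonzero element is below only finitely many maximal elements. -/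
def IsHLocal (L : Type*) [PGCLattice L] : Prop :=
  (∀ r : L, r ≠ ⊥ → IsPrime r → ∃! m : L, IsMaximal m ∧ r ≤ m) ∧
  (∀ b : L, b ≠ ⊥ → {m : L | IsMaximal m ∧ b ≤ m}.Finite)

end MulLattice

open MulLattice

/-!
In a lattice domain a nonzero principal element `p` is cancellable, so `((c * p) : (d * p)) = (c : d)`.
For nonzero principal `x, y ≤ a` one computes `(x * y : a) = y * (x : a)`: an element `t` with
`t * a ≤ x * y` lies below `y` (cancel `x` from `t * x ≤ t * a ≤ y * x`), hence is `s * y` with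
`s * a ≤ x` because `y` is meet-principal. Cancelling `y` then gives
`(x : (x : a)) = (x * y : (x * y : a))`, an expression symmetric in `x` and `y`.
-/

namespace MulLattice

variable {L : Type*} [MulLattice L]

theorem mul_sup (a b c : L) : a * (b ⊔ c) = a * b ⊔ a * c := by
  rw [← sSup_pair, mul_sSup, iSup_pair]

instance : IsOrderedMonoid L where
  mul_le_mul_left b c h a := by
    rw [mul_comm b, mul_comm c, ← sup_eq_right.2 h, mul_sup]
    exact le_sup_left

theorem res_mul_le (c p : L) : res c p * p ≤ c := by
  rw [mul_comm, res, mul_sSup]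
  exact iSup₂_le fun d hd => (mul_comm p d).trans_le hd

theorem le_res_iff {t c p : L} : t ≤ res c p ↔ t * p ≤ c :=
  ⟨fun h => (mul_le_mul_left h p).trans (res_mul_le c p), fun h => le_sSup h⟩

theorem IsMeetPrincipal.res_mul_eq_of_le {t p : L} (hp : IsMeetPrincipal p) (h : t ≤ p) :
    res t p * p = t := by
  have := hp t 1
  rwa [one_mul, inf_eq_left.2 h, one_eq_top, inf_top_eq, eq_comm] at this

section Domain

variable (hL : IsLatticeDomain L)
include hL

theorem res_bot_eq_bot {p : L} (hp0 : p ≠ ⊥) : res ⊥ p = ⊥ :=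
  eq_bot_iff.2 <| sSup_le fun d hd => (hL.2 d p hd).resolve_right (mt le_bot_iff.1 hp0)

namespace IsJoinPrincipal

variable {p : L} (hp : IsJoinPrincipal p) (hp0 : p ≠ ⊥)
include hp hp0

theorem res_mul_self (c : L) : res (c * p) p = c := by
  simpa [res_bot_eq_bot hL hp0] using (hp c ⊥).symm

theorem mul_le_mul_iff {t c : L} : t * p ≤ c * p ↔ t ≤ c := by
  rw [← le_res_iff, hp.res_mul_self hL hp0]

theorem res_mul_mul (c d : L) : res (c * p) (d * p) = res c d :=
  eq_of_forall_le_iff fun t => by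
    rw [le_res_iff, le_res_iff, ← mul_assoc, hp.mul_le_mul_iff hL hp0]

end IsJoinPrincipal

theorem res_mul_eq_mul_res {a x y : L} (hx : IsJoinPrincipal x) (hy : IsPrincipal y)
    (hx0 : x ≠ ⊥) (hy0 : y ≠ ⊥) (hxa : x ≤ a) : res (x * y) a = y * res x a := by
  refine le_antisymm ?_ (le_res_iff.2 ?_)
  · set t := res (x * y) a
    have hta : t * a ≤ x * y := res_mul_le _ _
    have hty : t ≤ y := (hx.mul_le_mul_iff hL hx0).1 <|
      calc t * x ≤ t * a := mul_le_mul_right hxa t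
        _ ≤ x * y := hta
        _ = y * x := mul_comm x y
    have hst : res t y * y = t := hy.1.res_mul_eq_of_le hty
    have hsa : res t y * a ≤ x := (hy.2.mul_le_mul_iff hL hy0).1 <| by
      rwa [mul_right_comm, hst]
    calc t = y * res t y := by rw [mul_comm, hst]
      _ ≤ y * res x a := mul_le_mul_right (le_res_iff.2 hsa) y
  · calc y * res x a * a = y * (res x a * a) := mul_assoc _ _ _
      _ ≤ y * x := mul_le_mul_right (res_mul_le x a) y
      _ = x * y := mul_comm y x

theorem res_res_mul_eq {a x y : L} (hx : IsJoinPrincipal x) (hy : IsPrincipal y)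
    (hx0 : x ≠ ⊥) (hy0 : y ≠ ⊥) (hxa : x ≤ a) :
    res (x * y) (res (x * y) a) = res x (res x a) := by
  rw [res_mul_eq_mul_res hL hx hy hx0 hy0 hxa, mul_comm y, hy.2.res_mul_mul hL hy0]

end Domain

end MulLattice

theorem stmt1_general {L : Type*} [PGCLattice L] (hL : IsLatticeDomain L)
    (a x y : L) (hx0 : x ≠ ⊥) (hy0 : y ≠ ⊥)
    (hx : IsPrincipal x) (hy : IsPrincipal y) (hxa : x ≤ a) (hya : y ≤ a) :
    res x (res x a) = res y (res y a) := by
  rw [← res_res_mul_eq hL hx.2 hy hx0 hy0 hxa, ← res_res_mul_eq hL hy.2 hx hy0 hx0 hya,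
    mul_comm x y]

theorem stmt1 {L : Type*} [PGCLattice L] (hL : IsLatticeDomain L)
    (a x y : L) (ha : a ≠ ⊥) (hx0 : x ≠ ⊥) (hy0 : y ≠ ⊥)
    (hx : IsPrincipal x) (hy : IsPrincipal y) (hxa : x ≤ a) (hya : y ≤ a) :
    res x (res x a) = res y (res y a) :=
  stmt1_general hL a x y hx0 hy0 hx hy hxa hya
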